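/- For α > 0 set K₁ = 4α, K₂ = 14α², k(x) = exp(−α(x² + x⁴)/58) − (α/6)(x² + x⁴), and define L₁(x) = x·k(x)³·exp(−K₁(x² + x⁴))/K₂ − (x³ + x⁴ + x⁵ + x⁷ + x⁹) for x ≥ 0. Then: (i) for every fixed α > 0, L₁(x) → −∞ as x → ∞; and (ii) for every positive integer n, L₁(nπ) → +∞ as α → 0⁺, so there exists α₀ > 0 such that for all α ∈ (0,α₀) one has L₁(nπ) > nπ; in particular for such α there is an interval of admissible initial-data norms d with nπ ≤ d < L₁(nπ). -/

import Mathlib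

noncomputable section
open Real Filter

/-- The metric lower-bound constant `k(x) = exp(−α(x²+x⁴)/58) − (α/6)(x²+x⁴)`. -/
def kconst (α x : ℝ) : ℝ :=
  Real.exp (-α * (x ^ 2 + x ^ 4) / 58) - (α / 6) * (x ^ 2 + x ^ 4)

/-- `L₁(x) = x k(x)³ exp(−K₁(x²+x⁴))/K₂ − (x³+x⁴+x⁵+x⁷+x⁹)` with `K₁ = 4α`,
`K₂ = 14α²`. -/
def L1 (α x : ℝ) : ℝ :=
  x * (kconst α x) ^ 3 * Real.exp (-(4 * α) * (x ^ 2 + x ^ 4)) / (14 * α ^ 2) -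
    (x ^ 3 + x ^ 4 + x ^ 5 + x ^ 7 + x ^ 9)

open scoped Topology

/-! For fixed `α > 0` the factor `k(x)` becomes negative once `α(x² + x⁴) ≥ 6`, after
which `L₁(x)` lies below `−(x³ + x⁴ + x⁵ + x⁷ + x⁹)`. For fixed `x > 0` the numerator of
the first term of `L₁(x)` tends to `x` as `α → 0`, while the denominator `14α²` tends to
`0⁺`. -/

lemma kconst_nonpos {α x : ℝ} (h : 6 ≤ α * (x ^ 2 + x ^ 4)) : kconst α x ≤ 0 := by
  have hexp : Real.exp (-α * (x ^ 2 + x ^ 4) / 58) ≤ 1 :=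
    Real.exp_le_one_iff.mpr (by linarith)
  unfold kconst
  linarith

lemma L1_le_neg_of_kconst_nonpos {α x : ℝ} (hx : 0 ≤ x) (hk : kconst α x ≤ 0) :
    L1 α x ≤ -(x ^ 3 + x ^ 4 + x ^ 5 + x ^ 7 + x ^ 9) := by
  have hfirst :
      x * kconst α x ^ 3 * Real.exp (-(4 * α) * (x ^ 2 + x ^ 4)) / (14 * α ^ 2) ≤ 0 :=
    div_nonpos_of_nonpos_of_nonneg
      (mul_nonpos_of_nonpos_of_nonneg
        (mul_nonpos_of_nonneg_of_nonpos hx (Odd.pow_nonpos (by decide) hk)) (Real.exp_pos _).le)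
      (by positivity)
  unfold L1
  linarith

lemma tendsto_L1_atTop_atBot {α : ℝ} (hα : 0 < α) : Tendsto (L1 α) atTop atBot := by
  have hk : ∀ᶠ x : ℝ in atTop, kconst α x ≤ 0 := by
    have hs : Tendsto (fun x : ℝ => α * (x ^ 2 + x ^ 4)) atTop atTop :=
      ((tendsto_pow_atTop two_ne_zero).atTop_add_atTop
        (tendsto_pow_atTop four_ne_zero)).const_mul_atTop hα
    exact (hs.eventually_ge_atTop 6).mono fun x => kconst_nonpos
  have hle : ∀ᶠ x : ℝ in atTop, L1 α x ≤ -x ^ 3 := by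
    filter_upwards [hk, eventually_ge_atTop 0] with x hkx hx
    linarith [L1_le_neg_of_kconst_nonpos hx hkx,
      pow_nonneg hx 4, pow_nonneg hx 5, pow_nonneg hx 7, pow_nonneg hx 9]
  exact tendsto_atBot_mono' _ hle (tendsto_neg_atBot_iff.mpr (tendsto_pow_atTop three_ne_zero))

lemma tendsto_L1_nhdsGT_zero {x : ℝ} (hx : 0 < x) :
    Tendsto (fun α => L1 α x) (𝓝[>] 0) atTop := by
  have hnum : Tendsto (fun α => x * kconst α x ^ 3 * Real.exp (-(4 * α) * (x ^ 2 + x ^ 4)))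
      (𝓝[>] 0) (𝓝 x) := by
    have hc :
        Continuous fun α => x * kconst α x ^ 3 * Real.exp (-(4 * α) * (x ^ 2 + x ^ 4)) := by
      unfold kconst; fun_prop
    simpa [kconst] using (hc.tendsto 0).mono_left nhdsWithin_le_nhds
  have hden : Tendsto (fun α : ℝ => 14 * α ^ 2) (𝓝[>] 0) (𝓝[>] 0) := by
    refine tendsto_nhdsWithin_of_tendsto_nhds_of_eventually_within _ ?_ ?_
    · have hc : Continuous fun α : ℝ => 14 * α ^ 2 := by fun_prop
      simpa using (hc.tendsto 0).mono_left nhdsWithin_le_nhds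
    · filter_upwards [self_mem_nhdsWithin] with α (hα : 0 < α)
      exact Set.mem_Ioi.mpr (by positivity)
  simp only [L1, div_eq_mul_inv, sub_eq_add_neg]
  exact tendsto_atTop_add_const_right _ _ (hnum.pos_mul_atTop hx hden.inv_tendsto_nhdsGT_zero)

/-- **Properties of the ball-invariance function `L₁`.**
(i) For every fixed `α > 0`, `L₁(x) → −∞` as `x → ∞`; (ii) for every positive
integer `n`, `L₁(nπ) → +∞` as `α → 0⁺`, so there is `α₀ > 0` such that
`L₁(nπ) > nπ` for all `α ∈ (0,α₀)`; in particular, for such `α` there is an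
admissible initial-data norm `d` with `nπ ≤ d < L₁(nπ)`. -/
theorem L1_properties :
    (∀ α : ℝ, 0 < α → Tendsto (fun x => L1 α x) atTop atBot) ∧
    (∀ n : ℕ, 0 < n →
      Tendsto (fun α => L1 α ((n:ℝ) * π)) (nhdsWithin 0 (Set.Ioi 0)) atTop ∧
      ∃ α₀ : ℝ, 0 < α₀ ∧ ∀ α ∈ Set.Ioo (0:ℝ) α₀,
        (n:ℝ) * π < L1 α ((n:ℝ) * π) ∧
        ∃ d : ℝ, (n:ℝ) * π ≤ d ∧ d < L1 α ((n:ℝ) * π)) := by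
  refine ⟨fun α hα => tendsto_L1_atTop_atBot hα, fun n hn => ?_⟩
  have hlim := tendsto_L1_nhdsGT_zero (x := n * π) (by positivity)
  obtain ⟨α₀, hα₀, hsub⟩ :=
    mem_nhdsGT_iff_exists_Ioo_subset.mp (hlim.eventually_gt_atTop ((n : ℝ) * π))
  exact ⟨hlim, α₀, hα₀, fun α hα => ⟨hsub hα, _, le_rfl, hsub hα⟩⟩

end
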